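/- arXiv:math/0601147 — 2 statements merged into one kernel-verified Lean document; each statement's English description precedes it below -/
import Mathlib

section
/- Suppose M ⊆ [0,1] is countable and P ⊆ [0,1] is a nonempty perfect set. Then there is a strictly monotone map h : M → P that preserves all existing infima and suprema: for every X ⊆ M, if inf X ∈ M then h(inf X) = inf h(X), and if sup X ∈ M then h(sup X) = sup h(X). Furthermore, if inf M ∈ M, then h can be chosen such that h(inf M) = inf P. -/
/-!
Let `μ` be an atomless probability measure carried by `P` whose support contains `inf P`, and let
`F` be its distribution function. Since `F` is continuous, its lower quantile function `Q` is a
strictly increasing map `[0, 1] → P` with `Q 0 = inf P`. It is left continuous, hence preserves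
suprema, and it is right continuous at every level `t` such that `F` is not constant just to the
right of `Q t`. Because `inf P` lies in the support of `μ` this includes `t = 0`, and the other
exceptional levels are among the countably many values of `F` at rationals. A scaling
`x ↦ b (x - inf M)` with generic `b ∈ (0, 1)` moves the countable set `M` off these levels, and
`h = Q ∘ (x ↦ b (x - inf M))` is the required embedding.
-/

open Set Filter Topology MeasureTheory ProbabilityTheory
open scoped ENNReal

instance : (𝓝[≠] (0 : ℕ → ZMod 2)).NeBot := by
  rw [← mem_closure_iff_nhdsWithin_neBot]
  have hsingle : Tendsto (fun n : ℕ => (Pi.single n 1 : ℕ → ZMod 2)) atTop (𝓝 0) := by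
    refine tendsto_pi_nhds.2 fun i => tendsto_nhds_of_eventually_eq ?_
    filter_upwards [eventually_gt_atTop i] with n hn
    simp [hn.ne]
  refine mem_closure_of_tendsto hsingle (Eventually.of_forall fun n h => ?_)
  simpa using congrFun h n

section PerfectMeasure

variable {α : Type*} [MetricSpace α] [CompleteSpace α] [MeasurableSpace α] [BorelSpace α]
  {C : Set α}

/-- The image of the Haar measure of the Cantor group `ℕ → ZMod 2` under a continuous injection
into `C`. -/
theorem Perfect.exists_isProbabilityMeasure (hC : Perfect C) (hne : C.Nonempty) :
    ∃ μ : Measure α, IsProbabilityMeasure μ ∧ NullSingletonClass μ ∧ μ Cᶜ = 0 := by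
  obtain ⟨f, hfC, hf, hfinj⟩ := hC.exists_nat_bool_injection hne
  let e : (ℕ → ZMod 2) → ℕ → Bool := fun x n => finTwoEquiv (x n)
  have he : Continuous e :=
    continuous_pi fun n => continuous_of_discreteTopology.comp (continuous_apply n)
  have hinj : Function.Injective (f ∘ e) := hfinj.comp finTwoEquiv.injective.comp_left
  have hm : Measurable (f ∘ e) := (hf.comp he).measurable
  let ν : Measure (ℕ → ZMod 2) := Measure.addHaarMeasure ⊤
  have : IsProbabilityMeasure ν :=
    ⟨by rw [← TopologicalSpace.PositiveCompacts.coe_top]; exact Measure.addHaarMeasure_self⟩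
  refine ⟨ν.map (f ∘ e), Measure.isProbabilityMeasure_map hm.aemeasurable, ⟨fun x => ?_⟩, ?_⟩
  · rw [Measure.map_apply hm (measurableSet_singleton x)]
    exact Set.Subsingleton.measure_zero (fun a ha b hb => hinj (ha.trans hb.symm)) ν
  · have hempty : (f ∘ e) ⁻¹' Cᶜ = ∅ := eq_empty_of_forall_notMem fun a ha => ha (hfC ⟨e a, rfl⟩)
    rw [Measure.map_apply hm hC.closed.measurableSet.compl, hempty, measure_empty]

/-- A mixture, with weights `2⁻¹ ^ (n + 1)`, of such measures carried by the perfect sets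
`closure (ball x (1 / (n + 1)) ∩ C)`. -/
theorem Perfect.exists_isProbabilityMeasure_mem_support (hC : Perfect C) {x : α} (hx : x ∈ C) :
    ∃ μ : Measure α, IsProbabilityMeasure μ ∧ NullSingletonClass μ ∧ μ Cᶜ = 0 ∧
      x ∈ μ.support := by
  set A : ℕ → Set α := fun n => closure (Metric.ball x (1 / (n + 1)) ∩ C)
  have hA : ∀ n, Perfect (A n) := fun n => (hC.acc.open_inter Metric.isOpen_ball).perfect_closure
  have hxA : ∀ n, x ∈ A n := fun n => subset_closure ⟨Metric.mem_ball_self (by positivity), hx⟩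
  choose ν hν hνa hνA using fun n => (hA n).exists_isProbabilityMeasure ⟨x, hxA n⟩
  refine ⟨Measure.sum fun n => (2⁻¹ : ℝ≥0∞) ^ (n + 1) • ν n, ⟨?_⟩, ⟨fun y => ?_⟩, ?_, ?_⟩
  · simp [Measure.sum_apply _ MeasurableSet.univ, ENNReal.tsum_geometric_add_one,
      ENNReal.one_sub_inv_two, ENNReal.inv_mul_cancel]
  · simp [Measure.sum_apply _ (measurableSet_singleton y)]
  · have hAC : ∀ n, (ν n) Cᶜ = 0 := fun n =>
      measure_mono_null (compl_subset_compl.2 (closure_minimal inter_subset_right hC.closed))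
        (hνA n)
    simp [Measure.sum_apply _ hC.closed.measurableSet.compl, hAC]
  · refine (Measure.mem_support_iff_forall x).2 fun U hU => ?_
    obtain ⟨ε, hε, hεU⟩ := Metric.mem_nhds_iff.1 hU
    obtain ⟨n, hn⟩ := exists_nat_one_div_lt hε
    have hAU : A n ⊆ Metric.closedBall x (1 / (n + 1)) :=
      closure_minimal (inter_subset_left.trans Metric.ball_subset_closedBall)
        Metric.isClosed_closedBall
    have hball : ν n (Metric.closedBall x (1 / (n + 1))) = 1 :=
      (prob_compl_eq_zero_iff Metric.isClosed_closedBall.measurableSet).1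
        (measure_mono_null (compl_subset_compl.2 hAU) (hνA n))
    calc (0 : ℝ≥0∞) < (2⁻¹ : ℝ≥0∞) ^ (n + 1) • ν n (Metric.closedBall x (1 / (n + 1))) := by
          rw [hball, smul_eq_mul, mul_one]
          exact ENNReal.pow_pos (by norm_num) _
      _ ≤ (2⁻¹ : ℝ≥0∞) ^ (n + 1) • ν n U :=
          by gcongr; exact (Metric.closedBall_subset_ball hn).trans hεU
      _ ≤ _ := Measure.le_sum (fun n => (2⁻¹ : ℝ≥0∞) ^ (n + 1) • ν n) n U

end PerfectMeasure

namespace ProbabilityTheory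

variable {μ : Measure ℝ} [IsProbabilityMeasure μ] {P : Set ℝ}

theorem continuous_cdf [NullSingletonClass μ] : Continuous (cdf μ) := by
  refine continuous_iff_continuousAt.2 fun x => ?_
  rw [(monotone_cdf μ).continuousAt_iff_leftLim_eq_rightLim, StieltjesFunction.rightLim_eq]
  have h := (cdf μ).measure_singleton x
  rw [measure_cdf, measure_singleton, eq_comm, ENNReal.ofReal_eq_zero, sub_nonpos] at h
  exact le_antisymm ((monotone_cdf μ).leftLim_le le_rfl) h

theorem nonempty_Ioc_inter_of_cdf_lt (hμP : μ Pᶜ = 0) {y z : ℝ} (h : cdf μ y < cdf μ z) :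
    (Ioc y z ∩ P).Nonempty := by
  by_contra hne
  have hnull : μ (Ioc y z) = 0 := measure_mono_null (fun p hp hpP => hne ⟨p, hp, hpP⟩) hμP
  rw [← measure_cdf μ, StieltjesFunction.measure_Ioc, ENNReal.ofReal_eq_zero, sub_nonpos] at hnull
  exact h.not_ge hnull

theorem cdf_eq_zero_of_mem_lowerBounds [NullSingletonClass μ] (hμP : μ Pᶜ = 0) {a : ℝ}
    (ha : a ∈ lowerBounds P) : cdf μ a = 0 := by
  have hsub : Iic a ⊆ Pᶜ ∪ {a} := fun y hy => hy.lt_or_eq.imp (fun h hyP => h.not_ge (ha hyP)) id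
  have hnull : μ (Iic a) = 0 :=
    measure_mono_null hsub (measure_union_null hμP (measure_singleton a))
  rw [cdf_eq_real, measureReal_def, hnull, ENNReal.toReal_zero]

theorem cdf_eq_one_of_mem_upperBounds (hμP : μ Pᶜ = 0) {c : ℝ} (hc : c ∈ upperBounds P) :
    cdf μ c = 1 := by
  have hfull : μ (Iic c) = 1 :=
    (prob_compl_eq_zero_iff measurableSet_Iic).1
      (measure_mono_null (fun y hy hyP => hy (hc hyP)) hμP)
  rw [cdf_eq_real, measureReal_def, hfull, ENNReal.toReal_one]

theorem cdf_pos_of_mem_support {x y : ℝ} (hx : x ∈ μ.support) (hxy : x < y) : 0 < cdf μ y := by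
  rw [cdf_eq_real, measureReal_def]
  exact ENNReal.toReal_pos ((Measure.mem_support_iff_forall x).1 hx _ (Iic_mem_nhds hxy)).ne'
    (measure_ne_top _ _)

end ProbabilityTheory

/-- The lower quantile function of `F`, cut off at `a`. For a distribution function vanishing at
`a` the cut-off only changes it at levels `t ≤ 0`, where it gives `a` instead of the junk `sInf`
of a set that is unbounded below. -/
noncomputable def quantile (F : ℝ → ℝ) (a t : ℝ) : ℝ := sInf {y | a ≤ y ∧ t ≤ F y}

section Quantile

variable {F : ℝ → ℝ} {a c s t y : ℝ}

theorem quantile_le_iff (hF : Monotone F) (hFc : Continuous F) (htc : t ≤ F c) :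
    quantile F a t ≤ y ↔ a ≤ y ∧ t ≤ F y := by
  have hclosed : IsClosed {y | a ≤ y ∧ t ≤ F y} :=
    isClosed_Ici.inter (isClosed_le continuous_const hFc)
  have hbdd : BddBelow {y | a ≤ y ∧ t ≤ F y} := ⟨a, fun y hy => hy.1⟩
  have hmem : quantile F a t ∈ {y | a ≤ y ∧ t ≤ F y} :=
    hclosed.csInf_mem ⟨max a c, le_max_left a c, htc.trans (hF (le_max_right a c))⟩ hbdd
  exact ⟨fun hy => ⟨hmem.1.trans hy, hmem.2.trans (hF hy)⟩, fun hy => csInf_le hbdd hy⟩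

theorem le_quantile (hF : Monotone F) (hFc : Continuous F) (htc : t ≤ F c) :
    a ≤ quantile F a t :=
  ((quantile_le_iff hF hFc htc).1 le_rfl).1

theorem le_apply_quantile (hF : Monotone F) (hFc : Continuous F) (htc : t ≤ F c) :
    t ≤ F (quantile F a t) :=
  ((quantile_le_iff hF hFc htc).1 le_rfl).2

theorem apply_lt_of_lt_quantile (hF : Monotone F) (hFc : Continuous F) (htc : t ≤ F c)
    (hay : a ≤ y) (hy : y < quantile F a t) : F y < t :=
  lt_of_not_ge fun h => hy.not_ge ((quantile_le_iff hF hFc htc).2 ⟨hay, h⟩)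

theorem quantile_eq_of_le_apply (hF : Monotone F) (hFc : Continuous F) (ht : t ≤ F a) :
    quantile F a t = a :=
  le_antisymm ((quantile_le_iff hF hFc ht).2 ⟨le_rfl, ht⟩) (le_quantile hF hFc ht)

theorem quantile_mono (hF : Monotone F) (hFc : Continuous F) (hst : s ≤ t) (htc : t ≤ F c) :
    quantile F a s ≤ quantile F a t :=
  (quantile_le_iff hF hFc (hst.trans htc)).2
    ⟨le_quantile hF hFc htc, hst.trans (le_apply_quantile hF hFc htc)⟩

theorem apply_quantile (hF : Monotone F) (hFc : Continuous F) (hat : F a ≤ t) (htc : t ≤ F c) :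
    F (quantile F a t) = t := by
  refine le_antisymm ?_ (le_apply_quantile hF hFc htc)
  rcases (le_quantile (a := a) hF hFc htc).eq_or_lt with h | h
  · rwa [← h]
  · by_contra! ht
    obtain ⟨y, hyQ, hay, hty⟩ :=
      ((eventually_gt_nhds h).and (hFc.continuousAt.eventually (eventually_gt_nhds ht))).exists_lt
    exact hty.not_gt (apply_lt_of_lt_quantile hF hFc htc hay.le hyQ)

theorem quantile_strictMonoOn (hF : Monotone F) (hFc : Continuous F) :
    StrictMonoOn (quantile F a) (Icc (F a) (F c)) := by
  intro s hs t ht hst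
  refine (quantile_mono hF hFc hst.le ht.2).lt_of_ne fun h => hst.ne ?_
  rw [← apply_quantile hF hFc hs.1 hs.2, h, apply_quantile hF hFc ht.1 ht.2]

theorem quantile_csSup (hF : Monotone F) (hFc : Continuous F) {T : Set ℝ} (hT : T.Nonempty)
    (hTb : BddAbove T) (hTc : sSup T ≤ F c) :
    quantile F a (sSup T) = sSup (quantile F a '' T) := by
  have hle : ∀ t ∈ T, t ≤ F c := fun t ht => (le_csSup hTb ht).trans hTc
  refine ((isLUB_iff_le_iff.2 fun y => ?_).csSup_eq (hT.image _)).symm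
  rw [quantile_le_iff hF hFc hTc, csSup_le_iff hTb hT, mem_upperBounds, forall_mem_image]
  constructor
  · rintro ⟨hay, hy⟩ t ht
    exact (quantile_le_iff hF hFc (hle t ht)).2 ⟨hay, hy t ht⟩
  · intro h
    obtain ⟨t₀, ht₀⟩ := hT
    exact ⟨((quantile_le_iff hF hFc (hle t₀ ht₀)).1 (h ht₀)).1,
      fun t ht => ((quantile_le_iff hF hFc (hle t ht)).1 (h ht)).2⟩

theorem quantile_csInf (hF : Monotone F) (hFc : Continuous F) {T : Set ℝ} (hT : T.Nonempty)
    (hTb : BddBelow T) (hTc : ∀ t ∈ T, t ≤ F c)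
    (hinc : ∀ y, quantile F a (sInf T) < y → sInf T < F y) :
    quantile F a (sInf T) = sInf (quantile F a '' T) := by
  have hsc : sInf T ≤ F c := let ⟨t, ht⟩ := hT; (csInf_le hTb ht).trans (hTc t ht)
  refine (IsGLB.csInf_eq ⟨?_, fun z hz => ?_⟩ (hT.image _)).symm
  · rintro _ ⟨t, ht, rfl⟩
    exact quantile_mono hF hFc (csInf_le hTb ht) (hTc t ht)
  · by_contra! hz'
    obtain ⟨y, hQy, hyz⟩ := exists_between hz'
    obtain ⟨t, ht, hty⟩ := exists_lt_of_csInf_lt hT (hinc y hQy)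
    have hQty : quantile F a t ≤ y := (quantile_le_iff hF hFc (hTc t ht)).2
      ⟨(le_quantile hF hFc hsc).trans hQy.le, hty.le⟩
    exact (hz ⟨t, ht, rfl⟩).not_gt (hQty.trans_lt hyz)

theorem lt_apply_of_quantile_lt (hF : Monotone F) (hFc : Continuous F) (htc : t ≤ F c)
    (ht : t ∉ range fun q : ℚ => F q) (hy : quantile F a t < y) : t < F y := by
  by_contra! hyt
  obtain ⟨q, hQq, hqy⟩ := exists_rat_btwn hy
  exact ht ⟨q, le_antisymm ((hF hqy.le).trans hyt)
    ((le_apply_quantile hF hFc htc).trans (hF hQq.le))⟩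

theorem quantile_mem {P : Set ℝ} (hF : Monotone F) (hFc : Continuous F) (hP : IsClosed P)
    (ha : a ∈ P) (htc : t ≤ F c) (hFP : ∀ y z, F y < F z → (Ioc y z ∩ P).Nonempty) :
    quantile F a t ∈ P := by
  rcases (le_quantile (a := a) hF hFc htc).eq_or_lt with h | h
  · rwa [← h]
  by_contra hQ
  obtain ⟨y, hyQ, hyP⟩ := exists_Ioc_subset_of_mem_nhds (hP.isOpen_compl.mem_nhds hQ) ⟨a, h⟩
  have hFy : F (max a y) < F (quantile F a t) :=
    (apply_lt_of_lt_quantile hF hFc htc (le_max_left a y) (max_lt h hyQ)).trans_le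
      (le_apply_quantile hF hFc htc)
  obtain ⟨p, hp, hpP⟩ := hFP _ _ hFy
  exact hyP ⟨(le_max_right a y).trans_lt hp.1, hp.2⟩ hpP

end Quantile

theorem exists_mem_Ioo_forall_mul_sub_notMem {M L : Set ℝ} (hM : M.Countable) (hL : L.Countable)
    (hL0 : (0 : ℝ) ∉ L) (c : ℝ) : ∃ b ∈ Ioo (0 : ℝ) 1, ∀ m ∈ M, b * (m - c) ∉ L := by
  have hB : (⋃ m ∈ M, (· / (m - c)) '' L).Countable := hM.biUnion fun m _ => hL.image _
  obtain ⟨b, hbB, hb⟩ := (hB.dense_compl ℝ).exists_between zero_lt_one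
  refine ⟨b, hb, fun m hm hbm => ?_⟩
  have hmc : m - c ≠ 0 := fun h => hL0 (by simpa [h] using hbm)
  exact hbB (mem_biUnion hm ⟨_, hbm, mul_div_cancel_right₀ b hmc⟩)

theorem Perfect.exists_strictMonoOn_Icc_mapsTo {P : Set ℝ} (hP : Perfect P) (hne : P.Nonempty)
    (hPb : BddBelow P) (hPa : BddAbove P) :
    ∃ Q : ℝ → ℝ, ∃ L : Set ℝ, L.Countable ∧ 0 ∉ L ∧ MapsTo Q (Icc 0 1) P ∧
      StrictMonoOn Q (Icc 0 1) ∧ Q 0 = sInf P ∧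
      (∀ T ⊆ Icc 0 1, T.Nonempty → Q (sSup T) = sSup (Q '' T)) ∧
      (∀ T ⊆ Icc 0 1, T.Nonempty → sInf T ∉ L → Q (sInf T) = sInf (Q '' T)) := by
  obtain ⟨c, hc⟩ := hPa
  have ha : sInf P ∈ P := hP.closed.csInf_mem hne hPb
  obtain ⟨μ, _, _, hμP, hsupp⟩ := hP.exists_isProbabilityMeasure_mem_support ha
  have hF := monotone_cdf μ
  have hFc : Continuous (cdf μ) := continuous_cdf
  have hFa : cdf μ (sInf P) = 0 := cdf_eq_zero_of_mem_lowerBounds hμP fun p hp => csInf_le hPb hp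
  have hF1 : cdf μ c = 1 := cdf_eq_one_of_mem_upperBounds hμP hc
  have hI : Icc (0 : ℝ) 1 = Icc (cdf μ (sInf P)) (cdf μ c) := by rw [hFa, hF1]
  refine ⟨quantile (cdf μ) (sInf P), range (fun q : ℚ => cdf μ q) \ {0},
    (countable_range _).mono sdiff_subset, fun h => h.2 rfl, fun t ht => ?_,
    hI ▸ quantile_strictMonoOn hF hFc, quantile_eq_of_le_apply hF hFc hFa.ge,
    fun T hT hTne => ?_, fun T hT hTne hTL => ?_⟩
  · exact quantile_mem hF hFc hP.closed ha (hF1 ▸ ht.2) fun _ _ => nonempty_Ioc_inter_of_cdf_lt hμP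
  · exact quantile_csSup hF hFc hTne ⟨1, fun t ht => (hT ht).2⟩
      (hF1 ▸ csSup_le hTne fun t ht => (hT ht).2)
  · have hTb : BddBelow T := ⟨0, fun t ht => (hT ht).1⟩
    have hT1 : sInf T ≤ cdf μ c := hF1 ▸ (csInf_le hTb hTne.some_mem).trans (hT hTne.some_mem).2
    refine quantile_csInf hF hFc hTne hTb (fun t ht => hF1 ▸ (hT ht).2) fun y hy => ?_
    by_cases h0 : sInf T = 0
    · rw [h0] at hy ⊢
      rw [quantile_eq_of_le_apply hF hFc hFa.ge] at hy
      exact cdf_pos_of_mem_support hsupp hy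
    · exact lt_apply_of_quantile_lt hF hFc hT1 (fun h => hTL ⟨h, h0⟩) hy

/-- Lemma 31: if M ⊆ [0,1] is countable and P ⊆ [0,1] is a nonempty
perfect set, there is a strictly monotone map h : M → P preserving all existing
(nonempty) infima and suprema; moreover if inf M ∈ M then h can be chosen with
h(inf M) = inf P. -/
theorem countable_embeds_into_perfect (M P : Set ℝ)
    (hM : M ⊆ Set.Icc 0 1) (hMc : M.Countable)
    (hP : P ⊆ Set.Icc 0 1) (hPperf : Perfect P) (hPne : P.Nonempty) :
    ∃ h : ℝ → ℝ, Set.MapsTo h M P ∧ StrictMonoOn h M ∧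
      (∀ X ⊆ M, X.Nonempty → sInf X ∈ M → h (sInf X) = sInf (h '' X)) ∧
      (∀ X ⊆ M, X.Nonempty → sSup X ∈ M → h (sSup X) = sSup (h '' X)) ∧
      (sInf M ∈ M → h (sInf M) = sInf P) := by
  obtain ⟨Q, L, hLc, hL0, hQP, hQmono, hQ0, hQsup, hQinf⟩ := hPperf.exists_strictMonoOn_Icc_mapsTo
    hPne ⟨0, fun p hp => (hP hp).1⟩ ⟨1, fun p hp => (hP hp).2⟩
  obtain ⟨b, hb, hbL⟩ := exists_mem_Ioo_forall_mul_sub_notMem hMc hLc hL0 (sInf M)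
  have hMb : BddBelow M := ⟨0, fun m hm => (hM hm).1⟩
  set φ : ℝ → ℝ := fun x => b * (x - sInf M)
  have hφ : StrictMono φ := fun x y hxy => mul_lt_mul_of_pos_left (sub_lt_sub_right hxy _) hb.1
  have hφc : Continuous φ := by fun_prop
  have hφM : MapsTo φ M (Icc 0 1) := fun m hm =>
    ⟨mul_nonneg hb.1.le (sub_nonneg.2 (csInf_le hMb hm)),
      mul_le_one₀ hb.2.le (sub_nonneg.2 (csInf_le hMb hm))
        (by linarith [(hM hm).2, le_csInf ⟨m, hm⟩ fun x hx => (hM hx).1])⟩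
  refine ⟨Q ∘ φ, hQP.comp hφM, hQmono.comp (hφ.strictMonoOn M) hφM, fun X hXM hX hXinf => ?_,
    fun X hXM hX _ => ?_, fun _ => by simp [φ, hQ0]⟩
  · have hφX : φ (sInf X) = sInf (φ '' X) :=
      hφ.monotone.map_csInf_of_continuousAt hφc.continuousAt hX (hMb.mono hXM)
    rw [Function.comp_apply, hφX,
      hQinf _ (hφM.mono_left hXM).image_subset (hX.image φ) (hφX ▸ hbL _ hXinf), image_comp]
  · have hφX : φ (sSup X) = sSup (φ '' X) :=
      hφ.monotone.map_csSup_of_continuousAt hφc.continuousAt hX ⟨1, fun x hx => (hM (hXM hx)).2⟩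
    rw [Function.comp_apply, hφX, hQsup _ (hφM.mono_left hXM).image_subset (hX.image φ), image_comp]
end

section
/- A Gödel set V is uncountable if and only if it contains a non-trivial densely ordered subset, i.e., a subset S ⊆ V with at least two elements such that for all a, b ∈ S with a < b there exists c ∈ S with a < c < b. -/
/-- A Gödel set: a closed subset of [0,1] containing 0 and 1. -/
def GodelSet (V : Set ℝ) : Prop :=
  IsClosed V ∧ V ⊆ Set.Icc 0 1 ∧ (0:ℝ) ∈ V ∧ (1:ℝ) ∈ V

open Set

/-- Two-sided condensation points of `W`. -/
def twoSidedCond (W : Set ℝ) : Set ℝ :=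
  {x | x ∈ W ∧ ∀ ε > (0:ℝ), ¬ (Ioo (x - ε) x ∩ W).Countable ∧ ¬ (Ioo x (x + ε) ∩ W).Countable}

lemma twoSidedCond_subset (W : Set ℝ) : twoSidedCond W ⊆ W := fun _ hx => hx.1

lemma twoSidedCond_mono {W V : Set ℝ} (h : W ⊆ V) : twoSidedCond W ⊆ twoSidedCond V := by
  rintro x ⟨hxW, hx⟩
  refine ⟨h hxW, fun ε hε => ?_⟩
  obtain ⟨h1, h2⟩ := hx ε hε
  exact ⟨fun hc => h1 (hc.mono (inter_subset_inter_right _ h)),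
         fun hc => h2 (hc.mono (inter_subset_inter_right _ h))⟩

lemma diff_twoSidedCond_countable (W : Set ℝ) : (W \ twoSidedCond W).Countable := by
  classical
  set Cond : ℝ → Prop :=
    fun x => ∀ p q : ℚ, (p:ℝ) < x → x < (q:ℝ) → ¬ (Ioo (p:ℝ) (q:ℝ) ∩ W).Countable with hCond
  set T1 : ℚ → ℚ → Set ℝ :=
    fun p q => {x | x ∈ Ioo (p:ℝ) (q:ℝ) ∩ W ∧ (Ioo (p:ℝ) (q:ℝ) ∩ W).Countable} with hT1def
  set T2 : ℚ → Set ℝ :=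
    fun q => {x | Cond x ∧ x < (q:ℝ) ∧ (Ioo x (q:ℝ) ∩ W).Countable} with hT2def
  set T3 : ℚ → Set ℝ :=
    fun p => {x | Cond x ∧ (p:ℝ) < x ∧ (Ioo (p:ℝ) x ∩ W).Countable} with hT3def
  have hT1 : ∀ p q : ℚ, (T1 p q).Countable := by
    intro p q
    by_cases h : (Ioo (p:ℝ) (q:ℝ) ∩ W).Countable
    · exact h.mono fun x hx => hx.1
    · have : T1 p q = ∅ := by
        ext x; simp only [hT1def, mem_setOf_eq, mem_empty_iff_false, iff_false, not_and]
        exact fun _ hc => absurd hc h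
      rw [this]; exact countable_empty
  have hT2 : ∀ q : ℚ, (T2 q).Subsingleton := by
    intro q x hx y hy
    by_contra hne
    rcases lt_or_gt_of_ne hne with hlt | hlt
    · obtain ⟨p, hp1, hp2⟩ := exists_rat_btwn hlt
      exact hy.1 p q hp2 hy.2.1
        (hx.2.2.mono (inter_subset_inter_left _ (Ioo_subset_Ioo (le_of_lt hp1) le_rfl)))
    · obtain ⟨p, hp1, hp2⟩ := exists_rat_btwn hlt
      exact hx.1 p q hp2 hx.2.1
        (hy.2.2.mono (inter_subset_inter_left _ (Ioo_subset_Ioo (le_of_lt hp1) le_rfl)))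
  have hT3 : ∀ p : ℚ, (T3 p).Subsingleton := by
    intro p x hx y hy
    by_contra hne
    rcases lt_or_gt_of_ne hne with hlt | hlt
    · obtain ⟨q, hq1, hq2⟩ := exists_rat_btwn hlt
      exact hx.1 p q hx.2.1 hq1
        (hy.2.2.mono (inter_subset_inter_left _ (Ioo_subset_Ioo le_rfl (le_of_lt hq2))))
    · obtain ⟨q, hq1, hq2⟩ := exists_rat_btwn hlt
      exact hy.1 p q hy.2.1 hq1
        (hx.2.2.mono (inter_subset_inter_left _ (Ioo_subset_Ioo le_rfl (le_of_lt hq2))))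
  have hsub : W \ twoSidedCond W ⊆
      (⋃ p : ℚ, ⋃ q : ℚ, T1 p q) ∪ ((⋃ q : ℚ, T2 q) ∪ (⋃ p : ℚ, T3 p)) := by
    rintro x ⟨hxW, hx⟩
    have hx' : ∃ ε > (0:ℝ), (Ioo (x - ε) x ∩ W).Countable ∨ (Ioo x (x + ε) ∩ W).Countable := by
      by_contra hno
      push_neg at hno
      exact hx ⟨hxW, fun ε hε => hno ε hε⟩
    obtain ⟨ε, hε, hcase⟩ := hx'
    by_cases hc : Cond x
    · rcases hcase with hcnt | hcnt
      · obtain ⟨p, hp1, hp2⟩ := exists_rat_btwn (show x - ε < x by linarith)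
        refine Or.inr (Or.inr (mem_iUnion.mpr ⟨p, hc, hp2, ?_⟩))
        exact hcnt.mono (inter_subset_inter_left _ (Ioo_subset_Ioo (le_of_lt hp1) le_rfl))
      · obtain ⟨q, hq1, hq2⟩ := exists_rat_btwn (show x < x + ε by linarith)
        refine Or.inr (Or.inl (mem_iUnion.mpr ⟨q, hc, hq1, ?_⟩))
        exact hcnt.mono (inter_subset_inter_left _ (Ioo_subset_Ioo le_rfl (le_of_lt hq2)))
    · simp only [hCond, not_forall, not_not] at hc
      obtain ⟨p, q, hp, hq, hcnt⟩ := hc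
      exact Or.inl (mem_iUnion.mpr ⟨p, mem_iUnion.mpr ⟨q, ⟨⟨hp, hq⟩, hxW⟩, hcnt⟩⟩)
  exact Set.Countable.mono hsub
    ((countable_iUnion fun p => countable_iUnion fun q => hT1 p q).union
      ((countable_iUnion fun q => (hT2 q).countable).union
        (countable_iUnion fun p => (hT3 p).countable)))

lemma twoSidedCond_uncountable {W : Set ℝ} (hW : ¬ W.Countable) :
    ¬ (twoSidedCond W).Countable := by
  intro h
  apply hW
  have : W ⊆ (W \ twoSidedCond W) ∪ twoSidedCond W := fun x hx => by
    by_cases hx' : x ∈ twoSidedCond W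
    · exact Or.inr hx'
    · exact Or.inl ⟨hx, hx'⟩
  exact ((diff_twoSidedCond_countable W).union h).mono this

/-- Corollary 32: a Gödel set is uncountable iff it contains a
non-trivial densely ordered subset. -/
theorem godelSet_uncountable_iff_dense_subset (V : Set ℝ) (hV : GodelSet V) :
    ¬ V.Countable ↔
      ∃ S ⊆ V, (∃ a ∈ S, ∃ b ∈ S, a ≠ b) ∧
        ∀ a ∈ S, ∀ b ∈ S, a < b → ∃ c ∈ S, a < c ∧ c < b := by
  constructor
  · intro hVu
    refine ⟨twoSidedCond V, twoSidedCond_subset V, ?_, ?_⟩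
    · have hu := twoSidedCond_uncountable hVu
      have hnt : (twoSidedCond V).Nontrivial :=
        Set.not_subsingleton_iff.mp fun hs => hu hs.countable
      obtain ⟨a, ha, b, hb, hab⟩ := hnt
      exact ⟨a, ha, b, hb, hab⟩
    · intro a ha b hb hab
      have hW' : ¬ (Ioo a b ∩ V).Countable := by
        have h2 := (ha.2 (b - a) (by linarith)).2
        have : a + (b - a) = b := by ring
        rwa [this] at h2
      have hu := twoSidedCond_uncountable hW'
      obtain ⟨c, hc⟩ : (twoSidedCond (Ioo a b ∩ V)).Nonempty := by
        rw [nonempty_iff_ne_empty]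
        intro h
        exact hu (h ▸ countable_empty)
      obtain ⟨hcab, _⟩ := twoSidedCond_subset _ hc
      exact ⟨c, twoSidedCond_mono inter_subset_right hc, hcab.1, hcab.2⟩
  · rintro ⟨S, hSV, ⟨a, ha, b, hb, hab⟩, hdense⟩ hVc
    letI : Nontrivial ↥S := ⟨⟨⟨a, ha⟩, ⟨b, hb⟩, fun h => hab (congrArg Subtype.val h)⟩⟩
    letI : DenselyOrdered ↥S :=
      ⟨fun x y hxy => by
        obtain ⟨c, hcS, h1, h2⟩ := hdense x x.2 y y.2 hxy
        exact ⟨⟨c, hcS⟩, h1, h2⟩⟩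
    obtain ⟨f⟩ : Nonempty (ℚ ↪o ↥S) := Order.embedding_from_countable_to_dense ℚ ↥S
    set g : ℝ → ℝ := fun x => sSup ((fun q : ℚ => ((f q : ↥S) : ℝ)) '' {q : ℚ | (q:ℝ) < x})
      with hg
    have hsubS : ∀ x : ℝ, (fun q : ℚ => ((f q : ↥S) : ℝ)) '' {q : ℚ | (q:ℝ) < x} ⊆ S := by
      rintro x v ⟨q, _, rfl⟩; exact (f q).2
    have hne : ∀ x : ℝ, ((fun q : ℚ => ((f q : ↥S) : ℝ)) '' {q : ℚ | (q:ℝ) < x}).Nonempty := by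
      intro x
      obtain ⟨q, hq⟩ := exists_rat_lt x
      exact ⟨_, ⟨q, hq, rfl⟩⟩
    have hbdd : ∀ x : ℝ, BddAbove ((fun q : ℚ => ((f q : ↥S) : ℝ)) '' {q : ℚ | (q:ℝ) < x}) := by
      intro x
      refine ⟨1, ?_⟩
      rintro v ⟨q, _, rfl⟩
      exact (hV.2.1 (hSV (f q).2)).2
    have hgmono : StrictMono g := by
      intro x y hxy
      obtain ⟨q1, hq11, hq12⟩ := exists_rat_btwn hxy
      obtain ⟨q2, hq21, hq22⟩ := exists_rat_btwn hq12
      have h1 : g x ≤ ((f q1 : ↥S) : ℝ) := by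
        apply csSup_le (hne x)
        rintro v ⟨q, hq, rfl⟩
        have : q < q1 := by exact_mod_cast lt_trans hq hq11
        exact le_of_lt (Subtype.coe_lt_coe.mpr (f.lt_iff_lt.mpr this))
      have h2 : ((f q1 : ↥S) : ℝ) < ((f q2 : ↥S) : ℝ) := by
        have : q1 < q2 := by exact_mod_cast hq21
        exact Subtype.coe_lt_coe.mpr (f.lt_iff_lt.mpr this)
      have h3 : ((f q2 : ↥S) : ℝ) ≤ g y :=
        le_csSup (hbdd y) ⟨q2, hq22, rfl⟩
      exact lt_of_le_of_lt h1 (lt_of_lt_of_le h2 h3)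
    have hrange : ∀ x : ℝ, g x ∈ V := by
      intro x
      have h1 : g x ∈ closure ((fun q : ℚ => ((f q : ↥S) : ℝ)) '' {q : ℚ | (q:ℝ) < x}) :=
        csSup_mem_closure (hne x) (hbdd x)
      have h2 : closure ((fun q : ℚ => ((f q : ↥S) : ℝ)) '' {q : ℚ | (q:ℝ) < x}) ⊆ closure S :=
        closure_mono (hsubS x)
      exact closure_minimal hSV hV.1 (h2 h1)
    have huniv : (univ : Set ℝ).Countable := by
      have : (g ⁻¹' V).Countable := hVc.preimage hgmono.injective
      exact this.mono fun x _ => hrange x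
    exact absurd (Set.countable_univ_iff.mp huniv) (not_countable (α := ℝ))
end
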